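/- If P ∈ ℝ[x,y] is a homogeneous polynomial of degree 4 in two variables whose Hessian determinant satisfies H(P) = c·P with c ≠ 0, then P is affinely equivalent (under the action of invertible affine transformations of ℝ²) to exactly one of: (x²+y²)², -(x²+y²)², x²y², or -x²y². -/

import Mathlib

/-- The `i`-th partial derivative of `F` at `x`. -/
noncomputable def pderivAt {n : ℕ} (F : (Fin n → ℝ) → ℝ) (i : Fin n) (x : Fin n → ℝ) : ℝ :=
  fderiv ℝ F x (Pi.single i 1)

/-- The Hessian matrix of second partial derivatives of `F` at `x`. -/
noncomputable def hessMatrix {n : ℕ} (F : (Fin n → ℝ) → ℝ) (x : Fin n → ℝ) :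
    Matrix (Fin n) (Fin n) ℝ :=
  Matrix.of fun i j => pderivAt (fun y => pderivAt F j y) i x

/-- The Hessian determinant of `F` at `x`. -/
noncomputable def hessDet {n : ℕ} (F : (Fin n → ℝ) → ℝ) (x : Fin n → ℝ) : ℝ :=
  (hessMatrix F x).det

/-! The Hessian of a binary quartic `P = a x⁴ + b x³y + c x²y² + d xy³ + e y⁴` is again a binary
quartic whose coefficients are quadratic in `a, …, e`, so `H(P) = μ P` is a system of five
quadratic equations. If `a ≠ 0` they say exactly that `16 a P = (4a x² + 2b xy + γ y²)²` with
`2aγ = 4ac - b²`; if `a = 0` they force `b = 0`, `c ≠ 0` and `c P = (c xy + (d/2) y²)²`. Either way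
`P` is a nonzero multiple of the square of a nondegenerate quadratic form, and a linear change of
variables turns that form into `x² + y²` (definite case) or `xy` (indefinite case). The four
normal forms are told apart by two affine invariants: the sign of the function, and whether its
zero set is a single point. -/

open MvPolynomial

theorem MvPolynomial.hasFDerivAt_eval {𝕜 σ : Type*} [NontriviallyNormedField 𝕜] [Fintype σ]
    (P : MvPolynomial σ 𝕜) (x : σ → 𝕜) :
    HasFDerivAt (fun y => eval y P)
      (∑ i, eval x (pderiv i P) • (ContinuousLinearMap.proj i : (σ → 𝕜) →L[𝕜] 𝕜)) x := by
  classical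
  induction P using MvPolynomial.induction_on with
  | C a =>
    simp only [eval_C, pderiv_C, map_zero]
    exact (hasFDerivAt_const a x).congr_fderiv (by ext; simp)
  | add P Q hP hQ =>
    simp only [map_add]
    refine (hP.fun_add hQ).congr_fderiv ?_
    ext v
    simp [add_mul, Finset.sum_add_distrib]
  | mul_X P i hP =>
    simp only [map_mul, eval_X]
    refine (hP.fun_mul (hasFDerivAt_apply i x)).congr_fderiv ?_
    ext v
    simp [Pi.single_apply, apply_ite (eval x), ite_mul, Finset.sum_add_distrib, add_mul,
      Finset.mul_sum, mul_assoc]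

theorem pderivAt_eval {n : ℕ} (P : MvPolynomial (Fin n) ℝ) (i : Fin n) (x : Fin n → ℝ) :
    pderivAt (fun y => eval y P) i x = eval x (pderiv i P) := by
  simp [pderivAt, (hasFDerivAt_eval P x).fderiv, Pi.single_apply]

theorem hessMatrix_eval {n : ℕ} (P : MvPolynomial (Fin n) ℝ) (x : Fin n → ℝ) :
    hessMatrix (fun y => eval y P) x = Matrix.of fun i j => eval x (pderiv i (pderiv j P)) := by
  simp only [hessMatrix, pderivAt_eval]

theorem pderiv_ofNat {σ R : Type*} [CommSemiring R] (i : σ) (n : ℕ) [n.AtLeastTwo] :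
    pderiv i (ofNat(n) : MvPolynomial σ R) = 0 :=
  (pderiv i).map_natCast n

theorem MvPolynomial.IsHomogeneous.eq_sum_fin_two {R : Type*} [CommSemiring R]
    {P : MvPolynomial (Fin 2) R} {n : ℕ} (hP : P.IsHomogeneous n) :
    P = ∑ k ∈ Finset.range (n + 1),
      C (P.coeff (Finsupp.single 0 k + Finsupp.single 1 (n - k))) * X 0 ^ k * X 1 ^ (n - k) := by
  set e : ℕ → Fin 2 →₀ ℕ := fun k => Finsupp.single 0 k + Finsupp.single 1 (n - k)
  have he : Function.Injective e := fun k l hkl => by simpa [e] using congrArg (· 0) hkl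
  have hmon : ∀ k, C (P.coeff (e k)) * X 0 ^ k * X 1 ^ (n - k) = monomial (e k) (P.coeff (e k)) :=
    fun k => by rw [monomial_add_single, C_mul_X_pow_eq_monomial]
  rw [Finset.sum_congr rfl fun k _ => hmon k,
    ← Finset.sum_image (g := e) (f := fun d => monomial d (P.coeff d)) he.injOn]
  conv_lhs => rw [P.as_sum]
  refine Finset.sum_subset (fun d hd => ?_) (fun d _ hd => by simp [notMem_support_iff.1 hd])
  have hdeg : d 0 + d 1 = n := by
    by_contra h
    exact mem_support_iff.1 hd (hP.coeff_eq_zero (by simpa [Finsupp.degree_eq_sum] using h))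
  refine Finset.mem_image.2 ⟨d 0, Finset.mem_range.2 (by omega), ?_⟩
  ext i
  fin_cases i
  · simp [e]
  · simp only [Fin.mk_one, e, Finsupp.add_apply, Finsupp.single_eq_same,
      Finsupp.single_eq_of_ne one_ne_zero]
    omega

noncomputable def binaryQuartic {R : Type*} [CommSemiring R] (a b c d e : R) :
    MvPolynomial (Fin 2) R :=
  C a * X 0 ^ 4 + C b * X 0 ^ 3 * X 1 + C c * X 0 ^ 2 * X 1 ^ 2 + C d * X 0 * X 1 ^ 3
    + C e * X 1 ^ 4

theorem MvPolynomial.IsHomogeneous.exists_eq_binaryQuartic {R : Type*} [CommSemiring R]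
    {P : MvPolynomial (Fin 2) R} (hP : P.IsHomogeneous 4) :
    ∃ a b c d e : R, P = binaryQuartic a b c d e := by
  set m : ℕ → R := fun k => P.coeff (Finsupp.single 0 k + Finsupp.single 1 (4 - k))
  refine ⟨m 4, m 3, m 2, m 1, m 0, ?_⟩
  rw [hP.eq_sum_fin_two]
  simp only [Finset.sum_range_succ, Finset.sum_range_zero, binaryQuartic, m]
  ring

theorem eval_binaryQuartic {R : Type*} [CommSemiring R] (a b c d e : R) (x : Fin 2 → R) :
    eval x (binaryQuartic a b c d e)
      = a * x 0 ^ 4 + b * x 0 ^ 3 * x 1 + c * x 0 ^ 2 * x 1 ^ 2 + d * x 0 * x 1 ^ 3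
        + e * x 1 ^ 4 := by
  simp [binaryQuartic]

theorem binaryQuartic_coeffs_eq_of_eval_eq {K : Type*} [Field K] [CharZero K]
    {a b c d e a' b' c' d' e' : K}
    (h : ∀ x, eval x (binaryQuartic a b c d e) = eval x (binaryQuartic a' b' c' d' e')) :
    a = a' ∧ b = b' ∧ c = c' ∧ d = d' ∧ e = e' := by
  have h₁ := h ![1, 0]
  have h₂ := h ![0, 1]
  have h₃ := h ![1, 1]
  have h₄ := h ![1, -1]
  have h₅ := h ![2, 1]
  simp only [eval_binaryQuartic] at h₁ h₂ h₃ h₄ h₅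
  norm_num at h₁ h₂ h₃ h₄ h₅
  refine ⟨by linear_combination h₁, ?_, ?_, ?_, by linear_combination h₂⟩
  · linear_combination (-2) * h₁ + (1 / 2) * h₂ + (-1 / 2) * h₃ + (-1 / 6) * h₄ + (1 / 6) * h₅
  · linear_combination (1 / 2) * h₃ + (1 / 2) * h₄ - h₁ - h₂
  · linear_combination 2 * h₁ + (-1 / 2) * h₂ + h₃ + (-1 / 3) * h₄ + (-1 / 6) * h₅

theorem hessDet_binaryQuartic (a b c d e : ℝ) (x : Fin 2 → ℝ) :
    hessDet (fun y => eval y (binaryQuartic a b c d e)) x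
      = eval x (binaryQuartic (24 * a * c - 9 * b ^ 2) (72 * a * d - 12 * b * c)
          (144 * a * e + 18 * b * d - 12 * c ^ 2) (72 * b * e - 12 * c * d)
          (24 * c * e - 9 * d ^ 2)) := by
  rw [hessDet, hessMatrix_eval, Matrix.det_fin_two]
  simp [binaryQuartic, pderiv_ofNat]
  ring

noncomputable def Matrix.toAffineEquiv {n K : Type*} [Fintype n] [DecidableEq n] [Field K]
    (M : Matrix n n K) (hM : M.det ≠ 0) : (n → K) ≃ᵃ[K] (n → K) :=
  (LinearMap.equivOfDetNeZero (Matrix.toLin' M) (by rwa [LinearMap.det_toLin'])).toAffineEquiv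

open Matrix in
theorem Matrix.toAffineEquiv_apply {n K : Type*} [Fintype n] [DecidableEq n] [Field K]
    (M : Matrix n n K) (hM : M.det ≠ 0) (x : n → K) : M.toAffineEquiv hM x = M *ᵥ x :=
  rfl

theorem Matrix.toAffineEquiv_fin_two_apply {K : Type*} [Field K] (p q r s : K)
    (h : !![p, q; r, s].det ≠ 0) (x : Fin 2 → K) :
    !![p, q; r, s].toAffineEquiv h x = ![p * x 0 + q * x 1, r * x 0 + s * x 1] := by
  ext i
  fin_cases i <;> simp [Matrix.toAffineEquiv_apply, Matrix.mulVec, dotProduct, Fin.sum_univ_two]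

def quadForm (α β γ : ℝ) (x : Fin 2 → ℝ) : ℝ := α * x 0 ^ 2 + 2 * β * x 0 * x 1 + γ * x 1 ^ 2

theorem quadForm_neg (α β γ : ℝ) (x : Fin 2 → ℝ) :
    quadForm (-α) (-β) (-γ) x = -quadForm α β γ x := by
  simp only [quadForm]
  ring

theorem quadForm_div (α β γ s : ℝ) (x : Fin 2 → ℝ) :
    quadForm (α / s) (β / s) (γ / s) x = quadForm α β γ x / s := by
  simp only [quadForm]
  ring

theorem exists_quadForm_eq_sq_add_sq {α β γ : ℝ} (hα : 0 < α) (hdisc : 0 < α * γ - β ^ 2) :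
    ∃ g : (Fin 2 → ℝ) ≃ᵃ[ℝ] (Fin 2 → ℝ), ∀ x, quadForm α β γ x = g x 0 ^ 2 + g x 1 ^ 2 := by
  set r := √α
  set δ := √(α * γ - β ^ 2)
  have hr : 0 < r := Real.sqrt_pos.2 hα
  have hδ : 0 < δ := Real.sqrt_pos.2 hdisc
  have hr2 : r ^ 2 = α := Real.sq_sqrt hα.le
  have hδ2 : δ ^ 2 = α * γ - β ^ 2 := Real.sq_sqrt hdisc.le
  -- completing the square: `α Q = (α x + β y)² + (αγ - β²) y²`
  refine ⟨!![r, β / r; 0, δ / r].toAffineEquiv (by simp [Matrix.det_fin_two_of, hr.ne', hδ.ne']),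
    fun x => ?_⟩
  simp only [quadForm, Matrix.toAffineEquiv_fin_two_apply, Matrix.cons_val]
  field_simp
  linear_combination (γ * x 1 ^ 2 - r ^ 2 * x 0 ^ 2) * hr2 - x 1 ^ 2 * hδ2

theorem exists_quadForm_sq_eq_sq_add_sq_sq {α β γ : ℝ} (hdisc : 0 < α * γ - β ^ 2) :
    ∃ g : (Fin 2 → ℝ) ≃ᵃ[ℝ] (Fin 2 → ℝ), ∀ x,
      quadForm α β γ x ^ 2 = (g x 0 ^ 2 + g x 1 ^ 2) ^ 2 := by
  have hα : α ≠ 0 := by rintro rfl; nlinarith [sq_nonneg β]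
  rcases hα.lt_or_gt with hα | hα
  · obtain ⟨g, hg⟩ := exists_quadForm_eq_sq_add_sq (β := -β) (γ := -γ) (neg_pos.2 hα)
      (by linear_combination hdisc)
    exact ⟨g, fun x => by rw [← hg, quadForm_neg, neg_sq]⟩
  · obtain ⟨g, hg⟩ := exists_quadForm_eq_sq_add_sq hα hdisc
    exact ⟨g, fun x => by rw [hg]⟩

theorem exists_quadForm_eq_mul {α β γ : ℝ} (hdisc : α * γ - β ^ 2 < 0) :
    ∃ g : (Fin 2 → ℝ) ≃ᵃ[ℝ] (Fin 2 → ℝ), ∀ x, quadForm α β γ x = g x 0 * g x 1 := by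
  rcases eq_or_ne α 0 with rfl | hα
  · have hβ : β ≠ 0 := by rintro rfl; simp at hdisc
    refine ⟨!![0, 1; 2 * β, γ].toAffineEquiv (by simpa [Matrix.det_fin_two_of] using hβ),
      fun x => ?_⟩
    simp only [quadForm, Matrix.toAffineEquiv_fin_two_apply, Matrix.cons_val]
    ring
  · set m := √(β ^ 2 - α * γ)
    have hm : 0 < m := Real.sqrt_pos.2 (by linarith)
    have hm2 : m ^ 2 = β ^ 2 - α * γ := Real.sq_sqrt (by linarith)
    -- `α Q = (α x + (β + m) y) (α x + (β - m) y)`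
    refine ⟨!![1, (β + m) / α; α, β - m].toAffineEquiv
      (by rw [Matrix.det_fin_two_of]; field_simp; intro h; linarith), fun x => ?_⟩
    simp only [quadForm, Matrix.toAffineEquiv_fin_two_apply, Matrix.cons_val]
    field_simp
    linear_combination x 1 ^ 2 * hm2

noncomputable def normalForm : Fin 4 → (Fin 2 → ℝ) → ℝ :=
  ![fun y : Fin 2 → ℝ => ((y 0) ^ 2 + (y 1) ^ 2) ^ 2,
    fun y : Fin 2 → ℝ => -((y 0) ^ 2 + (y 1) ^ 2) ^ 2,
    fun y : Fin 2 → ℝ => (y 0) ^ 2 * (y 1) ^ 2,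
    fun y : Fin 2 → ℝ => -((y 0) ^ 2 * (y 1) ^ 2)]

theorem exists_normalForm_eq_sign_mul_sq_quadForm {α β γ ε : ℝ} (hdisc : α * γ - β ^ 2 ≠ 0)
    (hε : ε = 1 ∨ ε = -1) :
    ∃ (i : Fin 4) (g : (Fin 2 → ℝ) ≃ᵃ[ℝ] (Fin 2 → ℝ)),
      ∀ x, ε * quadForm α β γ x ^ 2 = normalForm i (g x) := by
  rcases hdisc.lt_or_gt with hdisc | hdisc
  · obtain ⟨g, hg⟩ := exists_quadForm_eq_mul hdisc
    rcases hε with rfl | rfl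
    · exact ⟨2, g, fun x => by simp only [normalForm, Matrix.cons_val, hg]; ring⟩
    · exact ⟨3, g, fun x => by simp only [normalForm, Matrix.cons_val, hg]; ring⟩
  · obtain ⟨g, hg⟩ := exists_quadForm_sq_eq_sq_add_sq_sq hdisc
    rcases hε with rfl | rfl
    · exact ⟨0, g, fun x => by simp only [normalForm, Matrix.cons_val, hg, one_mul]⟩
    · exact ⟨1, g, fun x => by simp only [normalForm, Matrix.cons_val, hg]; ring⟩

def IsProportionalToSqNondegQuadForm (F : (Fin 2 → ℝ) → ℝ) : Prop :=
  ∃ κ α β γ : ℝ, κ ≠ 0 ∧ α * γ - β ^ 2 ≠ 0 ∧ ∀ x, κ * F x = quadForm α β γ x ^ 2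

theorem IsProportionalToSqNondegQuadForm.exists_normalForm {F : (Fin 2 → ℝ) → ℝ}
    (hF : IsProportionalToSqNondegQuadForm F) :
    ∃ (i : Fin 4) (g : (Fin 2 → ℝ) ≃ᵃ[ℝ] (Fin 2 → ℝ)), ∀ x, F x = normalForm i (g x) := by
  obtain ⟨κ, α, β, γ, hκ, hdisc, hF⟩ := hF
  obtain ⟨ε, hε, hκε⟩ : ∃ ε : ℝ, (ε = 1 ∨ ε = -1) ∧ κ = ε * |κ| := by
    rcases hκ.lt_or_gt with h | h
    · exact ⟨-1, Or.inr rfl, by rw [abs_of_neg h]; ring⟩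
    · exact ⟨1, Or.inl rfl, by rw [abs_of_pos h]; ring⟩
  set s := √|κ|
  have hs : 0 < s := Real.sqrt_pos.2 (abs_pos.2 hκ)
  have hs2 : s ^ 2 = |κ| := Real.sq_sqrt (abs_nonneg κ)
  have hdisc' : α / s * (γ / s) - (β / s) ^ 2 ≠ 0 := by
    field_simp
    exact div_ne_zero hdisc (by positivity)
  obtain ⟨i, g, hg⟩ := exists_normalForm_eq_sign_mul_sq_quadForm hdisc' hε
  refine ⟨i, g, fun x => ?_⟩
  have hε2 : ε ^ 2 = 1 := by rcases hε with rfl | rfl <;> norm_num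
  rw [← hg, quadForm_div, div_pow, ← hF, hs2]
  field_simp
  linear_combination (-ε * F x) * hκε - (F x * |κ|) * hε2

theorem normalForm_nonneg_iff (i : Fin 4) : (∀ y, 0 ≤ normalForm i y) ↔ i = 0 ∨ i = 2 := by
  refine ⟨fun h => ?_, ?_⟩
  · have h1 := h ![1, 1]
    fin_cases i <;> norm_num [normalForm] at h1 <;> decide
  · rintro (rfl | rfl) y <;> simp only [normalForm, Matrix.cons_val] <;> positivity

theorem subsingleton_normalForm_zeros_iff (i : Fin 4) :
    {y | normalForm i y = 0}.Subsingleton ↔ i = 0 ∨ i = 1 := by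
  have h00 : ![(0 : ℝ), 0] ≠ ![0, 1] := fun h => by simpa using congrFun h 1
  have hzero : ∀ y : Fin 2 → ℝ, (y 0 ^ 2 + y 1 ^ 2) ^ 2 = 0 ↔ y = 0 := fun y => by
    simp [funext_iff, Fin.forall_fin_two, add_eq_zero_iff_of_nonneg, sq_nonneg]
  fin_cases i
  · simp [normalForm, hzero]
  · simp [normalForm, hzero]
  · simp only [normalForm]
    exact iff_of_false (fun hs => h00 (hs (by simp) (by simp))) (by decide)
  · simp only [normalForm]
    exact iff_of_false (fun hs => h00 (hs (by simp) (by simp))) (by decide)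

theorem eq_of_normalForm_eq_comp {i j : Fin 4} (φ : (Fin 2 → ℝ) ≃ (Fin 2 → ℝ))
    (h : ∀ y, normalForm i y = normalForm j (φ y)) : i = j := by
  have hsign : (∀ y, 0 ≤ normalForm i y) ↔ ∀ y, 0 ≤ normalForm j y := by
    simp_rw [h]
    exact ⟨fun hj y => by simpa using hj (φ.symm y), fun hj y => hj (φ y)⟩
  have hzeros : {y | normalForm i y = 0} = φ ⁻¹' {y | normalForm j y = 0} := by
    ext y
    simp [h]
  have hsub : {y | normalForm i y = 0}.Subsingleton ↔ {y | normalForm j y = 0}.Subsingleton := by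
    rw [hzeros]
    exact ⟨fun hs => by simpa only [Set.image_preimage_eq _ φ.surjective] using hs.image φ,
      fun hs => hs.preimage φ.injective⟩
  rw [normalForm_nonneg_iff, normalForm_nonneg_iff] at hsign
  rw [subsingleton_normalForm_zeros_iff, subsingleton_normalForm_zeros_iff] at hsub
  have key : ∀ i j : Fin 4, (i = 0 ∨ i = 2 ↔ j = 0 ∨ j = 2) → (i = 0 ∨ i = 1 ↔ j = 0 ∨ j = 1) →
      i = j := by decide
  exact key i j hsign hsub

theorem existsUnique_normalForm_of_exists {F : (Fin 2 → ℝ) → ℝ}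
    (h : ∃ (i : Fin 4) (g : (Fin 2 → ℝ) ≃ᵃ[ℝ] (Fin 2 → ℝ)), ∀ x, F x = normalForm i (g x)) :
    ∃! i : Fin 4, ∃ g : (Fin 2 → ℝ) ≃ᵃ[ℝ] (Fin 2 → ℝ), ∀ x, F x = normalForm i (g x) := by
  obtain ⟨i, g, hg⟩ := h
  refine ⟨i, ⟨g, hg⟩, fun j ⟨g', hg'⟩ => (eq_of_normalForm_eq_comp (g.symm.trans g').toEquiv
    fun y => ?_).symm⟩
  simpa [hg] using hg' (g.symm y)

theorem isProportionalToSqNondegQuadForm_of_lead_ne_zero {a b c d e μ : ℝ} (ha : a ≠ 0)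
    (hμ : μ ≠ 0) (h₀ : 24 * a * c - 9 * b ^ 2 = μ * a) (h₁ : 72 * a * d - 12 * b * c = μ * b)
    (h₂ : 144 * a * e + 18 * b * d - 12 * c ^ 2 = μ * c) :
    IsProportionalToSqNondegQuadForm fun x => eval x (binaryQuartic a b c d e) := by
  obtain ⟨γ, hγ⟩ : ∃ γ, 2 * a * γ = 4 * a * c - b ^ 2 :=
    ⟨(4 * a * c - b ^ 2) / (2 * a), by field_simp⟩
  have hd : 8 * a ^ 2 * d = 4 * a * b * c - b ^ 3 := by
    linear_combination (a / 9) * h₁ - (b / 9) * h₀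
  have he : 64 * a ^ 3 * e = (4 * a * c - b ^ 2) ^ 2 := by
    linear_combination (4 * a ^ 2 / 9) * h₂ - (4 * a * c / 9) * h₀ - b * hd
  have hd' : 4 * a * d = b * γ :=
    mul_left_cancel₀ (mul_ne_zero two_ne_zero ha) (by linear_combination hd - b * hγ)
  have he' : 16 * a * e = γ ^ 2 :=
    mul_left_cancel₀ (pow_ne_zero 2 (mul_ne_zero two_ne_zero ha))
      (by linear_combination he - (2 * a * γ + 4 * a * c - b ^ 2) * hγ)
  refine ⟨16 * a, 4 * a, b, γ, mul_ne_zero (by norm_num) ha, fun h => mul_ne_zero hμ ha ?_,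
    fun x => ?_⟩
  · linear_combination -h₀ + 3 * h - 6 * hγ
  · simp only [eval_binaryQuartic, quadForm]
    linear_combination (-4 * x 0 ^ 2 * x 1 ^ 2) * hγ + (4 * x 0 * x 1 ^ 3) * hd' + x 1 ^ 4 * he'

theorem isProportionalToSqNondegQuadForm_of_lead_eq_zero {a b c d e μ : ℝ} (ha : a = 0)
    (hne : binaryQuartic a b c d e ≠ 0) (hμ : μ ≠ 0) (h₀ : 24 * a * c - 9 * b ^ 2 = μ * a)
    (h₂ : 144 * a * e + 18 * b * d - 12 * c ^ 2 = μ * c) (h₃ : 72 * b * e - 12 * c * d = μ * d)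
    (h₄ : 24 * c * e - 9 * d ^ 2 = μ * e) :
    IsProportionalToSqNondegQuadForm fun x => eval x (binaryQuartic a b c d e) := by
  subst ha
  obtain rfl : b = 0 := pow_eq_zero_iff two_ne_zero |>.1 (by linear_combination -h₀ / 9)
  have hc : c ≠ 0 := by
    rintro rfl
    obtain rfl : d = 0 := (mul_eq_zero.1 (by linear_combination -h₃)).resolve_left hμ
    obtain rfl : e = 0 := (mul_eq_zero.1 (by linear_combination -h₄)).resolve_left hμ
    exact hne (by simp [binaryQuartic])
  have hμc : μ = -12 * c := mul_right_cancel₀ hc (by linear_combination -h₂)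
  have hde : d ^ 2 = 4 * c * e := by linear_combination (-1 / 9) * h₄ - (e / 9) * hμc
  refine ⟨c, 0, c / 2, d / 2, hc, by simpa using hc, fun x => ?_⟩
  simp only [eval_binaryQuartic, quadForm]
  linear_combination (-x 1 ^ 4 / 4) * hde

theorem isProportionalToSqNondegQuadForm_of_hessDet_eq_smul {a b c d e μ : ℝ}
    (hne : binaryQuartic a b c d e ≠ 0) (hμ : μ ≠ 0)
    (hH : ∀ x, hessDet (fun y => eval y (binaryQuartic a b c d e)) x
      = μ * eval x (binaryQuartic a b c d e)) :
    IsProportionalToSqNondegQuadForm fun x => eval x (binaryQuartic a b c d e) := by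
  obtain ⟨h₀, h₁, h₂, h₃, h₄⟩ := binaryQuartic_coeffs_eq_of_eval_eq
    (a' := μ * a) (b' := μ * b) (c' := μ * c) (d' := μ * d) (e' := μ * e) fun x => by
      rw [← hessDet_binaryQuartic, hH, eval_binaryQuartic, eval_binaryQuartic]
      ring
  rcases eq_or_ne a 0 with ha | ha
  · exact isProportionalToSqNondegQuadForm_of_lead_eq_zero ha hne hμ h₀ h₂ h₃ h₄
  · exact isProportionalToSqNondegQuadForm_of_lead_ne_zero ha hμ h₀ h₁ h₂

theorem stmt16 (P : MvPolynomial (Fin 2) ℝ) (hP0 : P ≠ 0) (hP : P.IsHomogeneous 4)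
    (c : ℝ) (hc : c ≠ 0)
    (hH : ∀ x : Fin 2 → ℝ,
      hessDet (fun y => MvPolynomial.eval y P) x = c * MvPolynomial.eval x P) :
    ∃! i : Fin 4, ∃ g : (Fin 2 → ℝ) ≃ᵃ[ℝ] (Fin 2 → ℝ),
      ∀ x : Fin 2 → ℝ,
        MvPolynomial.eval x P
          = ![fun y : Fin 2 → ℝ => ((y 0) ^ 2 + (y 1) ^ 2) ^ 2,
              fun y : Fin 2 → ℝ => -((y 0) ^ 2 + (y 1) ^ 2) ^ 2,
              fun y : Fin 2 → ℝ => (y 0) ^ 2 * (y 1) ^ 2,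
              fun y : Fin 2 → ℝ => -((y 0) ^ 2 * (y 1) ^ 2)] i (g x) := by
  obtain ⟨a₀, a₁, a₂, a₃, a₄, rfl⟩ := hP.exists_eq_binaryQuartic
  exact existsUnique_normalForm_of_exists
    (isProportionalToSqNondegQuadForm_of_hessDet_eq_smul hP0 hc hH).exists_normalForm
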